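/- Let ℓ∈ℕ, let α₁,…,α_ℓ be positive real numbers that are rationally independent (i.e., k₁α₁+⋯+k_ℓα_ℓ = 0 with k₁,…,k_ℓ∈ℤ forces k₁=⋯=k_ℓ=0), and let β₁,…,β_ℓ∈ℝ be arbitrary. Then the sequences n ↦ ⌊nα_j+β_j⌋, j=1,…,ℓ, are independent: for every nonzero (k₁,…,k_ℓ)∈ℤ^ℓ we have k₁⌊nα₁+β₁⌋+⋯+k_ℓ⌊nα_ℓ+β_ℓ⌋ ≠ 0 for all but finitely many n∈ℕ. -/
import Mathlib


open Filter Topology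

/-- **(Frantzikinakis, example (i) of independent collections, Section 1.3).**
If `α 1, …, α ℓ` are rationally independent positive reals and `β 1, …, β ℓ ∈ ℝ` are
arbitrary, then the sequences `n ↦ ⌊n α j + β j⌋` are independent: for every nonzero
`k ∈ ℤ^ℓ`, `∑_j k j * ⌊n α j + β j⌋ ≠ 0` for all but finitely many `n`. -/
theorem floor_sequences_independent
    (ℓ : ℕ) (hℓ : 0 < ℓ) (α : Fin ℓ → ℝ) (hαpos : ∀ j, 0 < α j)
    (hαind : ∀ k : Fin ℓ → ℤ, ∑ j, (k j : ℝ) * α j = 0 → k = 0)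
    (β : Fin ℓ → ℝ) :
    ∀ k : Fin ℓ → ℤ, k ≠ 0 →
      {n : ℕ | ∑ j, k j * ⌊(n : ℝ) * α j + β j⌋ = 0}.Finite := by
  intro k hk
  set c : ℝ := ∑ j, (k j : ℝ) * α j with hc
  have hc0 : c ≠ 0 := fun h => hk (hαind k h)
  have hcpos : 0 < |c| := abs_pos.mpr hc0
  set C : ℝ := (∑ j, |(k j : ℝ)|) + |∑ j, (k j : ℝ) * β j| with hC
  apply Set.Finite.subset (Set.finite_Iic ⌈C / |c|⌉₊)
  intro n hn
  simp only [Set.mem_setOf_eq] at hn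
  have hcast : ∑ j, (k j : ℝ) * (⌊(n : ℝ) * α j + β j⌋ : ℝ) = 0 := by
    exact_mod_cast congrArg (fun z : ℤ => (z : ℝ)) hn
  have expand : (n : ℝ) * c =
      (∑ j, (k j : ℝ) * Int.fract ((n : ℝ) * α j + β j))
        - (∑ j, (k j : ℝ) * β j)
        + ∑ j, (k j : ℝ) * (⌊(n : ℝ) * α j + β j⌋ : ℝ) := by
    rw [hc, Finset.mul_sum, ← Finset.sum_sub_distrib, ← Finset.sum_add_distrib]
    refine Finset.sum_congr rfl fun j _ => ?_
    rw [Int.fract]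
    ring
  rw [hcast, add_zero] at expand
  have hbound : |(n : ℝ) * c| ≤ C := by
    rw [expand, hC]
    refine (abs_sub _ _).trans (add_le_add ?_ le_rfl)
    refine (Finset.abs_sum_le_sum_abs _ _).trans (Finset.sum_le_sum fun j _ => ?_)
    rw [abs_mul]
    have h0 := Int.fract_nonneg ((n : ℝ) * α j + β j)
    have h1 := (Int.fract_lt_one ((n : ℝ) * α j + β j)).le
    calc |(k j : ℝ)| * |Int.fract ((n : ℝ) * α j + β j)|
        ≤ |(k j : ℝ)| * 1 := by
          exact mul_le_mul_of_nonneg_left (by rw [abs_of_nonneg h0]; exact h1) (abs_nonneg _)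
      _ = |(k j : ℝ)| := mul_one _
  have hn' : (n : ℝ) ≤ C / |c| := by
    rw [le_div_iff₀ hcpos]
    calc (n : ℝ) * |c| = |(n : ℝ) * c| := by
          rw [abs_mul, Nat.abs_cast]
      _ ≤ C := hbound
  exact Set.mem_Iic.mpr (Nat.cast_le.mp (hn'.trans (Nat.le_ceil _)))
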